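/- arXiv:2401.02186 — 2 statements merged into one kernel-verified Lean document; each statement's English description precedes it below -/
import Mathlib

section
/- Let n ≥ 2 and let t, σ, θ > 0 be numbers such that θn/(tσ) > 1. Let B_ρ ⋐ B_{ρ+r} ⊂ ℝⁿ be concentric balls with ρ, r ∈ (0,1], and let f ∈ L¹(B_{ρ+r}) be a function with |f|^l ∈ L¹(B_{ρ+r}) for some l > 0. Then ‖P^{l,θ}_{t,σ}(f,·,r)‖_{L^∞(B_ρ)} ≤ c ‖f‖^{lθ/t}_{L^γ(B_{ρ+r})} holds for every γ > nlθ/(tσ) > 0, with c ≡ c(n,t,σ,l,θ,γ). -/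
open MeasureTheory Metric Filter Set
open scoped NNReal ENNReal Topology

noncomputable section

/-- Euclidean space `ℝⁿ`. -/
abbrev En (n : ℕ) := EuclideanSpace ℝ (Fin n)

/-- `ℓ_ω(t) := √(ω² + t²)`. -/
def ellw (ω t : ℝ) : ℝ := Real.sqrt (ω ^ 2 + t ^ 2)

/-- The auxiliary vector field `V_{ω,p}(z) := (ω² + |z|²)^{(p−2)/4} z`. -/
def Vmap (n : ℕ) (ω p : ℝ) (z : En n) : En n := ((ω ^ 2 + ‖z‖ ^ 2) ^ ((p - 2) / 4)) • z

/-- `𝒱²_{ω}(z₁,z₂)` with coefficients `A`, `B`. -/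
def Vsq (n : ℕ) (q s A B ω : ℝ) (z₁ z₂ : En n) : ℝ :=
  ‖Vmap n 1 1 z₁ - Vmap n 1 1 z₂‖ ^ 2 + A * ‖Vmap n ω q z₁ - Vmap n ω q z₂‖ ^ 2 +
    B * ‖Vmap n ω s z₁ - Vmap n ω s z₂‖ ^ 2

/-- The regularized integrand `H_{ω}` as a function of the gradient variable `z`,
with coefficients `A`, `B`. -/
def HzFun (n : ℕ) (ω q s A B : ℝ) (z : En n) : ℝ :=
  ellw ω ‖z‖ * Real.log (1 + ellw ω ‖z‖) + A * ellw ω ‖z‖ ^ q + B * ellw ω ‖z‖ ^ s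

/-- The (frozen) regularized integrand as a function of `t = |z|`. -/
def HFrozen (ω q s A B t : ℝ) : ℝ :=
  ellw ω t * Real.log (1 + ellw ω t) + A * ellw ω t ^ q + B * ellw ω t ^ s

/-- `ẽ_{ω,σ}`: the main expression of `E_{ω,σ}` evaluated at `t = 0`. -/
def eLow (q s A B ω : ℝ) : ℝ :=
  ω - Real.log (1 + ω) + min 1 (q - 1) * A * ω ^ q + min 1 (s - 1) * B * ω ^ s

/-- `E_{ω,σ}(t)` with coefficients `A`, `B`. -/
def EFrozen (q s A B ω t : ℝ) : ℝ :=
  ellw ω t - Real.log (1 + ellw ω t) + min 1 (q - 1) * A * ellw ω t ^ q +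
    min 1 (s - 1) * B * ellw ω t ^ s - eLow q s A B ω

/-- `Ẽ_{ω,σ} := E_{ω,σ} + log(1 + ℓ_ω) + ẽ_{ω,σ}`. -/
def ETilde (q s A B ω t : ℝ) : ℝ :=
  EFrozen q s A B ω t + Real.log (1 + ellw ω t) + eLow q s A B ω

/-- `Du` is a weak (distributional) gradient of `u` on `U`, with `u`, `Du` locally
integrable on `U`. -/
def IsWeakGradOn (n : ℕ) (U : Set (En n)) (u : En n → ℝ) (Du : En n → En n) : Prop :=
  LocallyIntegrableOn u U volume ∧ LocallyIntegrableOn (fun x => ‖Du x‖) U volume ∧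
  ∀ φ : En n → ℝ, ContDiff ℝ (⊤ : ℕ∞) φ → HasCompactSupport φ → tsupport φ ⊆ U →
    ∀ v : En n, ∫ x in U, u x * fderiv ℝ φ x v = - ∫ x in U, (inner ℝ (Du x) v : ℝ) * φ x

/-- `u ∈ W^{1,1}_loc(U)` with weak gradient `Du` is a local minimizer of
`w ↦ ∫_U F(x, Dw) dx`. -/
def IsLocalMinimizerOf (n : ℕ) (U : Set (En n)) (F : En n → En n → ℝ)
    (u : En n → ℝ) (Du : En n → En n) : Prop :=
  IsWeakGradOn n U u Du ∧
  LocallyIntegrableOn (fun x => F x (Du x)) U volume ∧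
  ∀ (φ : En n → ℝ) (Dφ : En n → En n), IsWeakGradOn n U φ Dφ →
    HasCompactSupport φ → tsupport φ ⊆ U →
    ∫ x in tsupport φ, F x (Du x) ≤ ∫ x in tsupport φ, F x (Du x + Dφ x)

/-- `g ∈ W^{1,p}₀(B)`: `g` is approximable in the `W^{1,p}(B)`-energy by smooth
functions compactly supported in `B`. -/
def ZeroTraceW1 (n : ℕ) (p : ℝ) (B : Set (En n)) (g : En n → ℝ) (Dg : En n → En n) : Prop :=
  ∃ φ : ℕ → En n → ℝ,
    (∀ k, ContDiff ℝ (⊤ : ℕ∞) (φ k) ∧ HasCompactSupport (φ k) ∧ tsupport (φ k) ⊆ B) ∧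
    Tendsto (fun k => ∫ x in B, (|φ k x - g x| ^ p + ‖gradient (φ k) x - Dg x‖ ^ p))
      atTop (nhds 0)

/-- `w ∈ u₀ + W^{1,p}₀(B)`, with weak gradient `Dw` of class `L^p(B)`. -/
def InDirichlet (n : ℕ) (p : ℝ) (B : Set (En n)) (u₀ : En n → ℝ) (Du₀ : En n → En n)
    (w : En n → ℝ) (Dw : En n → En n) : Prop :=
  IsWeakGradOn n B w Dw ∧ IntegrableOn (fun x => ‖Dw x‖ ^ p) B volume ∧
  ZeroTraceW1 n p B (fun x => w x - u₀ x) (fun x => Dw x - Du₀ x)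

/-- The nonlinear Havin–Mazya–Wolff type potential `P^{l,θ}_{t,σ}(f, x₀, r)`. -/
def wolffPot (n : ℕ) (l θ t σ : ℝ) (f : En n → ℝ) (x₀ : En n) (r : ℝ) : ℝ :=
  ∫ ρ in Set.Ioo (0 : ℝ) r, ρ ^ σ * (⨍ x in ball x₀ ρ, |f x| ^ l) ^ (θ / t) / ρ


private lemma avg_nonneg_aux {n : ℕ} (F : En n → ℝ) (hF : ∀ x, 0 ≤ F x) (c : En n) (s : ℝ) :
    0 ≤ ⨍ x in ball c s, F x := by
  rw [setAverage_eq]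
  exact smul_nonneg (by positivity) (setIntegral_nonneg measurableSet_ball fun x _ => hF x)

private lemma holder_ball_aux {n : ℕ} (f : En n → ℝ) (hf : Measurable f) {l γ : ℝ}
    (hl : 0 < l) (hlγ : l < γ) (c : En n) {s : ℝ} (_hs : 0 < s)
    (hint : IntegrableOn (fun x => |f x| ^ γ) (ball c s) volume) :
    ∫ x in ball c s, |f x| ^ l ≤
      (∫ x in ball c s, |f x| ^ γ) ^ (l / γ) *
        (volume (ball c s)).toReal ^ (1 - l / γ) := by
  have hγ : 0 < γ := hl.trans hlγ
  set μ := volume.restrict (ball c s) with hμdef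
  haveI : IsFiniteMeasure μ :=
    ⟨by rw [hμdef, Measure.restrict_apply_univ]; exact measure_ball_lt_top⟩
  set p := γ / l with hp
  have hp1 : 1 < p := (one_lt_div hl).2 hlγ
  have hpq : p.HolderConjugate (Real.conjExponent p) := .conjExponent hp1
  have hγne : ENNReal.ofReal γ ≠ 0 := (ENNReal.ofReal_pos.2 hγ).ne'
  have hlne : ENNReal.ofReal l ≠ 0 := (ENNReal.ofReal_pos.2 hl).ne'
  have hfγ : MemLp f (ENNReal.ofReal γ) μ := by
    refine (memLp_norm_rpow_iff hf.aestronglyMeasurable hγne (by simp)).1 ?_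
    rw [ENNReal.div_self hγne (by simp)]
    refine memLp_one_iff_integrable.2 ?_
    have hfun : (fun x => ‖f x‖ ^ (ENNReal.ofReal γ).toReal) = fun x => |f x| ^ γ := by
      funext x; rw [ENNReal.toReal_ofReal hγ.le, Real.norm_eq_abs]
    rw [hfun]
    exact hint
  have hF : MemLp (fun x => |f x| ^ l) (ENNReal.ofReal p) μ := by
    have h := hfγ.norm_rpow_div (ENNReal.ofReal l)
    have hfun : (fun x => ‖f x‖ ^ (ENNReal.ofReal l).toReal) = fun x => |f x| ^ l := by
      funext x; rw [ENNReal.toReal_ofReal hl.le, Real.norm_eq_abs]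
    rw [hfun] at h
    rwa [hp, ENNReal.ofReal_div_of_pos hl]
  have key := integral_mul_le_Lp_mul_Lq_of_nonneg hpq
    (Filter.Eventually.of_forall fun x => Real.rpow_nonneg (abs_nonneg _) _)
    (Filter.Eventually.of_forall fun _ => zero_le_one)
    hF (memLp_const (1 : ℝ))
  simp only [mul_one, Real.one_rpow] at key
  have h2 : ∫ a, (|f a| ^ l) ^ p ∂μ = ∫ a, |f a| ^ γ ∂μ := by
    refine integral_congr_ae (Filter.Eventually.of_forall fun x => ?_)
    show (|f x| ^ l) ^ p = |f x| ^ γ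
    rw [← Real.rpow_mul (abs_nonneg _), hp, mul_comm, div_mul_cancel₀ _ hl.ne']
  have h1 : ∫ _a, (1 : ℝ) ∂μ = (volume (ball c s)).toReal := by
    simp [hμdef, Measure.restrict_apply_univ, measureReal_def]
  rw [h2, h1] at key
  have hq1 : 1 / Real.conjExponent p = 1 - l / γ := by
    have := hpq.one_sub_inv
    rw [one_div, ← this, hp]
    rw [inv_div]
  have hq2 : 1 / p = l / γ := by rw [hp, one_div, inv_div]
  rw [hq1, hq2] at key
  exact key

/-- **Lemma 2.4 (embedding for nonlinear potentials).** -/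
theorem statement4 (n : ℕ) (hn : 2 ≤ n) (t σ θ l γ : ℝ)
    (ht : 0 < t) (hσ : 0 < σ) (hθ : 0 < θ) (hl : 0 < l)
    (hmain : 1 < θ * n / (t * σ)) (hγ : n * l * θ / (t * σ) < γ) :
    ∃ c : ℝ, 0 < c ∧
      ∀ (x₀ : En n) (ρ r : ℝ) (f : En n → ℝ),
        0 < ρ → ρ ≤ 1 → 0 < r → r ≤ 1 → Measurable f →
        IntegrableOn f (ball x₀ (ρ + r)) volume →
        IntegrableOn (fun x => |f x| ^ l) (ball x₀ (ρ + r)) volume →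
        IntegrableOn (fun x => |f x| ^ γ) (ball x₀ (ρ + r)) volume →
        ∀ x ∈ ball x₀ ρ,
          wolffPot n l θ t σ f x r ≤
            c * ((∫ y in ball x₀ (ρ + r), |f y| ^ γ) ^ (1 / γ)) ^ (l * θ / t) := by
  have hn' : (0:ℝ) < n := by
    have : 0 < n := by omega
    exact_mod_cast this
  have htσ : 0 < t * σ := mul_pos ht hσ
  have h1 : l < n * l * θ / (t * σ) := by
    calc l = l * 1 := (mul_one l).symm
    _ < l * (θ * ↑n / (t * σ)) := by
        exact (mul_lt_mul_iff_right₀ hl).2 hmain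
    _ = ↑n * l * θ / (t * σ) := by ring
  have hlγ : l < γ := h1.trans hγ
  have hγpos : 0 < γ := hl.trans hlγ
  have htγ : 0 < t * γ := mul_pos ht hγpos
  set β := l * θ / (t * γ) with hβdef
  have hβ : 0 < β := by rw [hβdef]; positivity
  have hγ' : n * l * θ < γ * (t * σ) := (div_lt_iff₀ htσ).1 hγ
  have hnβ : (n:ℝ) * β < σ := by
    have hEq : (n:ℝ) * β = n * l * θ / (t * γ) := by rw [hβdef]; ring
    rw [hEq, div_lt_iff₀ htγ]
    nlinarith
  set e := σ - n * β with hedef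
  have he : 0 < e := by rw [hedef]; linarith
  set ω := (volume (ball (0 : En n) 1)).toReal with hωdef
  have hω : 0 < ω := by
    rw [hωdef]
    exact ENNReal.toReal_pos (measure_ball_pos volume _ one_pos).ne' measure_ball_lt_top.ne
  refine ⟨ω ^ (-β) / e, by positivity, ?_⟩
  intro x₀ ρ r f hρ hρ1 hr hr1 hfm hint1 hintl hintγ x hx
  set J := ∫ y in ball x₀ (ρ + r), |f y| ^ γ with hJdef
  have hJ0 : 0 ≤ J := setIntegral_nonneg measurableSet_ball
    fun y _ => Real.rpow_nonneg (abs_nonneg _) _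
  set M := ω ^ (-β) * J ^ β with hMdef
  have hM0 : 0 ≤ M := by rw [hMdef]; positivity
  -- the majorant is integrable
  have hrint : IntegrableOn (fun s : ℝ => s ^ (e - 1)) (Set.Ioo (0:ℝ) r) volume := by
    have h := (intervalIntegral.intervalIntegrable_rpow' (show (-1:ℝ) < e - 1 by linarith)
      (a := 0) (b := r)).1
    exact h.mono_set Set.Ioo_subset_Ioc_self
  have hmaj : IntegrableOn (fun s : ℝ => M * s ^ (e - 1)) (Set.Ioo (0:ℝ) r) volume :=
    hrint.const_mul M
  -- pointwise bound on (0, r)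
  have hpt : ∀ s ∈ Set.Ioo (0:ℝ) r,
      s ^ σ * (⨍ y in ball x s, |f y| ^ l) ^ (θ / t) / s ≤ M * s ^ (e - 1) := by
    intro s hsmem
    obtain ⟨hs, hsr⟩ := hsmem
    have hsub : ball x s ⊆ ball x₀ (ρ + r) := by
      apply ball_subset_ball'
      have hxd : dist x x₀ < ρ := mem_ball.1 hx
      linarith
    have hintγs : IntegrableOn (fun y => |f y| ^ γ) (ball x s) volume :=
      hintγ.mono_set hsub
    set m := (volume (ball x s)).toReal with hmdef
    have hm : m = s ^ n * ω := by
      rw [hmdef, Measure.addHaar_ball_of_pos volume x hs, ENNReal.toReal_mul,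
        ENNReal.toReal_ofReal (by positivity), finrank_euclideanSpace_fin, hωdef]
    have hmpos : 0 < m := by rw [hm]; positivity
    set A := ⨍ y in ball x s, |f y| ^ l with hAdef
    have hA0 : 0 ≤ A :=
      avg_nonneg_aux _ (fun y => Real.rpow_nonneg (abs_nonneg _) _) x s
    have hIγJ : ∫ y in ball x s, |f y| ^ γ ≤ J := by
      rw [hJdef]
      exact setIntegral_mono_set hintγ
        (Filter.Eventually.of_forall fun y => Real.rpow_nonneg (abs_nonneg _) _)
        (HasSubset.Subset.eventuallyLE hsub)
    have hIγ0 : 0 ≤ ∫ y in ball x s, |f y| ^ γ :=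
      setIntegral_nonneg measurableSet_ball fun y _ => Real.rpow_nonneg (abs_nonneg _) _
    have hA2 : A ≤ m ^ (-(l / γ)) * J ^ (l / γ) := by
      have hh := holder_ball_aux f hfm hl hlγ x hs hintγs
      have hstep : A ≤ m⁻¹ * ((∫ y in ball x s, |f y| ^ γ) ^ (l / γ) * m ^ (1 - l / γ)) := by
        rw [hAdef, setAverage_eq, smul_eq_mul, measureReal_def, ← hmdef]
        exact mul_le_mul_of_nonneg_left (by rw [← hmdef] at hh; exact hh)
          (inv_nonneg.2 hmpos.le)
      refine hstep.trans ?_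
      have hstep2 : (∫ y in ball x s, |f y| ^ γ) ^ (l / γ) ≤ J ^ (l / γ) :=
        Real.rpow_le_rpow hIγ0 hIγJ (by positivity)
      calc m⁻¹ * ((∫ y in ball x s, |f y| ^ γ) ^ (l / γ) * m ^ (1 - l / γ))
          ≤ m⁻¹ * (J ^ (l / γ) * m ^ (1 - l / γ)) := by
            apply mul_le_mul_of_nonneg_left _ (inv_nonneg.2 hmpos.le)
            exact mul_le_mul_of_nonneg_right hstep2 (Real.rpow_nonneg hmpos.le _)
        _ = m ^ (-(l / γ)) * J ^ (l / γ) := by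
            rw [← Real.rpow_neg_one m]
            rw [mul_comm ((J:ℝ) ^ (l / γ)) (m ^ (1 - l / γ)), ← mul_assoc,
              ← Real.rpow_add hmpos]
            ring_nf
    have hApow : A ^ (θ / t) ≤ m ^ (-(l / γ) * (θ / t)) * J ^ ((l / γ) * (θ / t)) := by
      have := Real.rpow_le_rpow hA0 hA2 (by positivity : (0:ℝ) ≤ θ / t)
      rwa [Real.mul_rpow (Real.rpow_nonneg hmpos.le _) (Real.rpow_nonneg hJ0 _),
        ← Real.rpow_mul hmpos.le, ← Real.rpow_mul hJ0] at this
    have hexp1 : (l / γ) * (θ / t) = β := by rw [hβdef]; field_simp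
    have hLHS : s ^ σ * A ^ (θ / t) / s = s ^ (σ - 1) * A ^ (θ / t) := by
      rw [Real.rpow_sub hs, Real.rpow_one]
      ring
    rw [hLHS]
    calc s ^ (σ - 1) * A ^ (θ / t)
        ≤ s ^ (σ - 1) * (m ^ (-(l / γ) * (θ / t)) * J ^ ((l / γ) * (θ / t))) := by
          exact mul_le_mul_of_nonneg_left hApow (Real.rpow_nonneg hs.le _)
      _ = M * s ^ (e - 1) := by
          have hmβ : m ^ (-β) = s ^ ((n:ℝ) * -β) * ω ^ (-β) := by
            rw [hm, Real.mul_rpow (by positivity) hω.le, ← Real.rpow_natCast s n,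
              ← Real.rpow_mul hs.le]
          have hs2 : s ^ (σ - 1) * s ^ ((n:ℝ) * -β) = s ^ (e - 1) := by
            rw [← Real.rpow_add hs]
            congr 1
            rw [hedef]; ring
          have hneg : -(l / γ) * (θ / t) = -β := by rw [← hexp1]; ring
          rw [hexp1, hneg, hmβ, hMdef, ← hs2]
          ring
  -- compare integrals
  have hcomp : wolffPot n l θ t σ f x r ≤ ∫ s in Set.Ioo (0:ℝ) r, M * s ^ (e - 1) := by
    rw [wolffPot]
    refine integral_mono_of_nonneg ?_ hmaj ?_
    · filter_upwards [ae_restrict_mem measurableSet_Ioo] with s hs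
      have hA0 : 0 ≤ ⨍ y in ball x s, |f y| ^ l :=
        avg_nonneg_aux _ (fun y => Real.rpow_nonneg (abs_nonneg _) _) x s
      have := hs.1
      positivity
    · filter_upwards [ae_restrict_mem measurableSet_Ioo] with s hs
      exact hpt s hs
  have hval : ∫ s in Set.Ioo (0:ℝ) r, M * s ^ (e - 1) = M * (r ^ e / e) := by
    rw [integral_const_mul, ← integral_Ioc_eq_integral_Ioo,
      ← intervalIntegral.integral_of_le hr.le,
      integral_rpow (Or.inl (show (-1:ℝ) < e - 1 by linarith))]
    rw [sub_add_cancel, Real.zero_rpow he.ne', sub_zero]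
  have hRHS : ((∫ y in ball x₀ (ρ + r), |f y| ^ γ) ^ (1 / γ)) ^ (l * θ / t) = J ^ β := by
    rw [← hJdef, ← Real.rpow_mul hJ0]
    congr 1
    rw [hβdef]
    field_simp
  rw [hRHS]
  calc wolffPot n l θ t σ f x r ≤ M * (r ^ e / e) := hcomp.trans_eq hval
    _ ≤ M * (1 / e) := by
        have h1 : r ^ e ≤ 1 := Real.rpow_le_one hr.le hr1 he.le
        gcongr
    _ = ω ^ (-β) / e * J ^ β := by rw [hMdef]; ring
end
end

section
/- Define, for ω ∈ (0,1], σ ∈ (0,1), λ_{ω,σ}(x,|z|) := 1/(1+ℓ_ω(z)) + q min{1,q−1} a_σ(x)(ℓ_ω(z))^{q−2} + s min{1,s−1} b_σ(x)(ℓ_ω(z))^{s−2} and Λ_{ω,σ}(x,|z|) := 2n²( log(1+ℓ_ω(z))/ℓ_ω(z) + 1/(1+ℓ_ω(z)) ) + qn² max{1,q−1} a_σ(x)(ℓ_ω(z))^{q−2} + sn² max{1,s−1} b_σ(x)(ℓ_ω(z))^{s−2}, where a_σ = a+σ, b_σ = b+σ with 0 ≤ a, b bounded and 1 < q, s < 2.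 Then for all x, z, ξ the two-sided bound λ_{ω,σ}(x,|z|)|ξ|² ≤ ⟨∂_{zz}H_{ω,σ}(x,z)ξ, ξ⟩ and |∂_{zz}H_{ω,σ}(x,z)| ≤ Λ_{ω,σ}(x,|z|) holds, and moreover Λ_{ω,σ}(x,|z|)/λ_{ω,σ}(x,|z|) ≤ c(n,q,s) log(1+ℓ_ω(z)) for all z ∈ ℝⁿ with |z| ≥ e−1. -/
open MeasureTheory Metric Filter Set
open scoped NNReal ENNReal Topology

noncomputable section

section Statement9Helpers

/-- `m0 u = φ'(u)/u` : the "orthogonal eigenvalue". -/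
def m0 (q s A B u : ℝ) : ℝ :=
  Real.log (1+u)/u + 1/(1+u) + q*A*u^(q-2) + s*B*u^(s-2)

def dm0 (q s A B u : ℝ) : ℝ :=
  1/(u*(1+u)) - Real.log (1+u)/u^2 - 1/(1+u)^2
    + q*A*((q-2) * (u^(q-2)/u)) + s*B*((s-2)*(u^(s-2)/u))

lemma hasDerivAt_phi (q s A B u : ℝ) (hu : 0 < u) :
    HasDerivAt (fun u => u * Real.log (1 + u) + A * u ^ q + B * u ^ s)
      (Real.log (1 + u) + u / (1 + u) + A * (q * u ^ (q - 1)) + B * (s * u ^ (s - 1))) u := by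
  have h1u : (0:ℝ) < 1 + u := by linarith
  have hlog : HasDerivAt (fun u : ℝ => Real.log (1 + u)) (1/(1+u)) u := by
    simpa using (((hasDerivAt_id u).const_add 1).log h1u.ne')
  have h1 : HasDerivAt (fun u : ℝ => u * Real.log (1+u)) (Real.log (1+u) + u/(1+u)) u := by
    have := (hasDerivAt_id u).mul hlog
    refine this.congr_deriv (Eq.symm ?_)
    field_simp
    rfl
  have h2 := (Real.hasDerivAt_rpow_const (p := q) (Or.inl hu.ne')).const_mul A
  have h3 := (Real.hasDerivAt_rpow_const (p := s) (Or.inl hu.ne')).const_mul B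
  exact (h1.add h2).add h3

lemma hasDerivAt_m0 (q s A B u : ℝ) (hu : 0 < u) :
    HasDerivAt (m0 q s A B) (dm0 q s A B u) u := by
  have h1u : (0:ℝ) < 1 + u := by linarith
  have hlog : HasDerivAt (fun u : ℝ => Real.log (1 + u)) (1/(1+u)) u := by
    simpa using (((hasDerivAt_id u).const_add 1).log h1u.ne')
  have h1 : HasDerivAt (fun u : ℝ => Real.log (1+u)/u)
      ((1/(1+u) * u - Real.log (1+u) * 1)/u^2) u := hlog.div (hasDerivAt_id u) hu.ne'
  have h2 : HasDerivAt (fun u : ℝ => 1/(1+u))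
      ((0 * (1+u) - 1 * 1)/(1+u)^2) u :=
    (hasDerivAt_const u 1).div ((hasDerivAt_id u).const_add 1) h1u.ne'
  have h3 := (Real.hasDerivAt_rpow_const (p := q-2) (Or.inl hu.ne')).const_mul (q*A)
  have h4 := (Real.hasDerivAt_rpow_const (p := s-2) (Or.inl hu.ne')).const_mul (s*B)
  have := ((h1.add h2).add h3).add h4
  refine this.congr_deriv (Eq.symm ?_)
  unfold dm0
  rw [show q-2-1 = (q-2)-1 by ring, Real.rpow_sub hu (q-2) 1, Real.rpow_one,
      Real.rpow_sub hu (s-2) 1, Real.rpow_one]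
  field_simp
  ring

lemma hasFDerivAt_radius (n : ℕ) (ω : ℝ) (z : En n) :
    HasFDerivAt (fun w : En n => ω^2 + ‖w‖^2) (2 • innerSL ℝ z) z := by
  have := ((hasFDerivAt_id z).norm_sq).const_add (ω^2)
  simpa using this

lemma keyH (n : ℕ) (ω q s A B : ℝ) (hω : 0 < ω) (z : En n) :
    HasFDerivAt (HzFun n ω q s A B)
      ((m0 q s A B (ellw ω ‖z‖)) • innerSL ℝ z) z := by
  have hr : (0:ℝ) < ω^2 + ‖z‖^2 := by positivity
  have hl : (0:ℝ) < Real.sqrt (ω^2+‖z‖^2) := Real.sqrt_pos.2 hr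
  have h1l : (0:ℝ) < 1 + Real.sqrt (ω^2+‖z‖^2) := by linarith
  have hphi := hasDerivAt_phi q s A B _ hl
  have hcomp := ((hphi.comp _ (Real.hasDerivAt_sqrt hr.ne')).comp_hasFDerivAt z
    (hasFDerivAt_radius n ω z))
  have hfun : (((fun u => u * Real.log (1+u) + A*u^q + B*u^s) ∘ Real.sqrt) ∘
      (fun w : En n => ω^2 + ‖w‖^2)) = HzFun n ω q s A B := rfl
  rw [hfun] at hcomp
  refine hcomp.congr_fderiv (Eq.symm ?_)
  ext ξ
  simp only [ContinuousLinearMap.smul_apply, smul_eq_mul, ellw, m0]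
  rw [show q-2 = (q-1)-1 by ring, Real.rpow_sub hl (q-1) 1, Real.rpow_one,
      show s-2 = (s-1)-1 by ring, Real.rpow_sub hl (s-1) 1, Real.rpow_one]
  field_simp
  ring

lemma keyC (n : ℕ) (ω q s A B : ℝ) (hω : 0 < ω) (z : En n) :
    HasFDerivAt (fun w : En n => m0 q s A B (ellw ω ‖w‖))
      ((dm0 q s A B (ellw ω ‖z‖) / ellw ω ‖z‖) • innerSL ℝ z) z := by
  have hr : (0:ℝ) < ω^2 + ‖z‖^2 := by positivity
  have hl : (0:ℝ) < Real.sqrt (ω^2+‖z‖^2) := Real.sqrt_pos.2 hr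
  have hm := hasDerivAt_m0 q s A B _ hl
  have hcomp := ((hm.comp _ (Real.hasDerivAt_sqrt hr.ne')).comp_hasFDerivAt z
    (hasFDerivAt_radius n ω z))
  have hfun : ((m0 q s A B ∘ Real.sqrt) ∘ (fun w : En n => ω^2 + ‖w‖^2)) =
      (fun w : En n => m0 q s A B (ellw ω ‖w‖)) := rfl
  rw [hfun] at hcomp
  refine hcomp.congr_fderiv (Eq.symm ?_)
  ext ξ
  simp only [ContinuousLinearMap.smul_apply, smul_eq_mul, ellw]
  field_simp
  ring

def innerR (n : ℕ) : En n →L[ℝ] En n →L[ℝ] ℝ := innerSL ℝ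

@[simp] lemma innerR_apply (n : ℕ) (w v : En n) : innerR n w v = inner ℝ w v := rfl

lemma keyH2 (n : ℕ) (ω q s A B : ℝ) (hω : 0 < ω) (z : En n) :
    HasFDerivAt (fun w : En n => (m0 q s A B (ellw ω ‖w‖)) • innerSL ℝ w)
      ((m0 q s A B (ellw ω ‖z‖)) • innerR n
        + ((dm0 q s A B (ellw ω ‖z‖) / ellw ω ‖z‖) • innerSL ℝ z).smulRight
            (innerR n z)) z :=
  (keyC n ω q s A B hω z).smul ((innerR n).hasFDerivAt)

lemma fderiv_HzFun (n : ℕ) (ω q s A B : ℝ) (hω : 0 < ω) :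
    fderiv ℝ (HzFun n ω q s A B) = fun w : En n => (m0 q s A B (ellw ω ‖w‖)) • innerSL ℝ w :=
  funext fun w => (keyH n ω q s A B hω w).fderiv

lemma fderiv2_HzFun (n : ℕ) (ω q s A B : ℝ) (hω : 0 < ω) (z : En n) :
    fderiv ℝ (fderiv ℝ (HzFun n ω q s A B)) z =
      (m0 q s A B (ellw ω ‖z‖)) • innerR n
        + ((dm0 q s A B (ellw ω ‖z‖) / ellw ω ‖z‖) • innerSL ℝ z).smulRight
            (innerR n z) := by
  rw [fderiv_HzFun n ω q s A B hω]
  exact (keyH2 n ω q s A B hω z).fderiv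

lemma fderiv2_apply (n : ℕ) (ω q s A B : ℝ) (hω : 0 < ω) (z ξ : En n) :
    fderiv ℝ (fderiv ℝ (HzFun n ω q s A B)) z ξ ξ =
      m0 q s A B (ellw ω ‖z‖) * ‖ξ‖^2 +
        (dm0 q s A B (ellw ω ‖z‖) / ellw ω ‖z‖) * ((inner ℝ z ξ : ℝ) * (inner ℝ z ξ : ℝ)) := by
  rw [fderiv2_HzFun n ω q s A B hω z]
  simp only [ContinuousLinearMap.add_apply, ContinuousLinearMap.smul_apply,
    ContinuousLinearMap.smulRight_apply, innerSL_apply_apply, innerR_apply, smul_eq_mul]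
  rw [real_inner_self_eq_norm_sq]
  ring

lemma norm_innerR (n : ℕ) (w : En n) : ‖innerR n w‖ = ‖w‖ := innerSL_apply_norm ℝ w

lemma fderiv2_norm_le (n : ℕ) (ω q s A B : ℝ) (hω : 0 < ω) (z : En n) :
    ‖fderiv ℝ (fderiv ℝ (HzFun n ω q s A B)) z‖ ≤
      |m0 q s A B (ellw ω ‖z‖)| + |dm0 q s A B (ellw ω ‖z‖) / ellw ω ‖z‖| * ‖z‖^2 := by
  rw [fderiv2_HzFun n ω q s A B hω z]
  refine ContinuousLinearMap.opNorm_le_bound _ (by positivity) (fun ξ => ?_)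
  simp only [ContinuousLinearMap.add_apply, ContinuousLinearMap.smul_apply,
    ContinuousLinearMap.smulRight_apply, innerSL_apply_apply, smul_eq_mul]
  refine (norm_add_le _ _).trans ?_
  rw [norm_smul, norm_smul, norm_innerR, norm_innerR]
  have h1 : ‖(inner ℝ z ξ : ℝ)‖ ≤ ‖z‖ * ‖ξ‖ := by
    rw [Real.norm_eq_abs]; exact abs_real_inner_le_norm z ξ
  rw [norm_mul, Real.norm_eq_abs (m0 q s A B (ellw ω ‖z‖)), Real.norm_eq_abs,
    Real.norm_eq_abs] at *
  have hz := abs_real_inner_le_norm z ξ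
  have h0 : (0:ℝ) ≤ |dm0 q s A B (ellw ω ‖z‖) / ellw ω ‖z‖| := abs_nonneg _
  have h0' : (0:ℝ) ≤ ‖z‖ := norm_nonneg _
  nlinarith [abs_nonneg (m0 q s A B (ellw ω ‖z‖)), norm_nonneg ξ,
    mul_le_mul_of_nonneg_left hz h0]

-- lower eigenvalue bound
lemma core_lower (q s A B ℓ L pq ps α β P N : ℝ)
    (hq1 : 1 < q) (hq2 : q < 2) (hs1 : 1 < s) (hs2 : s < 2)
    (hA : 0 < A) (hB : 0 < B) (hℓ : 0 < ℓ) (hL0 : 0 ≤ L)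
    (hpq : 0 < pq) (hps : 0 < ps)
    (hα : α = L/ℓ + 1/(1+ℓ) + q*A*pq + s*B*ps)
    (hβ : β*ℓ^2 = (1/(1+ℓ) + 1/(1+ℓ)^2 + q*(q-1)*A*pq + s*(s-1)*B*ps) - α)
    (hP : 0 ≤ P) (hPN : P ≤ ℓ^2 * N) (hN : 0 ≤ N) :
    (1/(1+ℓ) + q*(q-1)*A*pq + s*(s-1)*B*ps) * N ≤ α*N + β*P := by
  have h1ℓ : (0:ℝ) < 1+ℓ := by linarith
  have hLl : 0 ≤ L/ℓ := by positivity
  have hApq : 0 < A*pq := mul_pos hA hpq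
  have hBps : 0 < B*ps := mul_pos hB hps
  have hq' : q*(q-1)*A*pq ≤ q*A*pq := by
    nlinarith [mul_pos (mul_pos (show (0:ℝ)<q by linarith) (show (0:ℝ)<2-q by linarith)) hApq]
  have hs' : s*(s-1)*B*ps ≤ s*B*ps := by
    nlinarith [mul_pos (mul_pos (show (0:ℝ)<s by linarith) (show (0:ℝ)<2-s by linarith)) hBps]
  have hlamα : (1/(1+ℓ) + q*(q-1)*A*pq + s*(s-1)*B*ps) ≤ α := by
    rw [hα]; linarith
  rcases le_or_gt 0 β with hb | hb
  · linarith [mul_nonneg hb hP, mul_le_mul_of_nonneg_right hlamα hN]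
  · have h2 : β * P ≥ β * (ℓ^2 * N) := mul_le_mul_of_nonpos_left hPN hb.le
    have h3 : β * (ℓ^2 * N) = (β*ℓ^2) * N := by ring
    have h4 : (1/(1+ℓ) + q*(q-1)*A*pq + s*(s-1)*B*ps) ≤ β*ℓ^2 + α := by
      rw [hβ]
      have : (0:ℝ) < 1/(1+ℓ)^2 := by positivity
      linarith
    have h5 := mul_le_mul_of_nonneg_right h4 hN
    have h6 : (β*ℓ^2+α)*N = (β*ℓ^2)*N + α*N := by ring
    linarith

-- upper norm bound
lemma core_upper (q s A B n ℓ L pq ps α β Z : ℝ)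
    (hq1 : 1 < q) (hq2 : q < 2) (hs1 : 1 < s) (hs2 : s < 2)
    (hA : 0 < A) (hB : 0 < B) (hℓ : 0 < ℓ) (hL0 : 0 ≤ L)
    (hpq : 0 < pq) (hps : 0 < ps) (hn4 : 4 ≤ n^2)
    (hα : α = L/ℓ + 1/(1+ℓ) + q*A*pq + s*B*ps)
    (hβ : β*ℓ^2 = (1/(1+ℓ) + 1/(1+ℓ)^2 + q*(q-1)*A*pq + s*(s-1)*B*ps) - α)
    (hZ0 : 0 ≤ Z) (hZ : Z ≤ ℓ^2) :
    |α| + |β| * Z ≤ 2*n^2*(L/ℓ + 1/(1+ℓ)) + q*n^2*A*pq + s*n^2*B*ps := by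
  have h1ℓ : (0:ℝ) < 1+ℓ := by linarith
  have hLl : 0 ≤ L/ℓ := by positivity
  have hApq : 0 < A*pq := mul_pos hA hpq
  have hBps : 0 < B*ps := mul_pos hB hps
  have hα0 : 0 ≤ α := by rw [hα]; positivity
  have hqq : 0 ≤ q*(q-1)*A*pq := by
    have := mul_nonneg (mul_nonneg (mul_nonneg (show (0:ℝ) ≤ q by linarith)
      (show (0:ℝ) ≤ q-1 by linarith)) hA.le) hpq.le
    linarith
  have hss : 0 ≤ s*(s-1)*B*ps := by
    have := mul_nonneg (mul_nonneg (mul_nonneg (show (0:ℝ) ≤ s by linarith)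
      (show (0:ℝ) ≤ s-1 by linarith)) hB.le) hps.le
    linarith
  have hφ2 : 0 ≤ 1/(1+ℓ) + 1/(1+ℓ)^2 + q*(q-1)*A*pq + s*(s-1)*B*ps := by
    have h2 : (0:ℝ) ≤ 1/(1+ℓ) := by positivity
    have h3 : (0:ℝ) ≤ 1/(1+ℓ)^2 := by positivity
    linarith
  have habs : |α| = α := abs_of_nonneg hα0
  have hβZ : |β| * Z ≤ |β| * ℓ^2 := mul_le_mul_of_nonneg_left hZ (abs_nonneg β)
  have hβl : |β| * ℓ^2 = |β*ℓ^2| := by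
    rw [abs_mul, abs_of_nonneg (by positivity : (0:ℝ) ≤ ℓ^2)]
  have hβb : |β*ℓ^2| ≤ (1/(1+ℓ) + 1/(1+ℓ)^2 + q*(q-1)*A*pq + s*(s-1)*B*ps) + α := by
    rw [hβ]; exact (abs_sub _ _).trans (by rw [abs_of_nonneg hφ2, abs_of_nonneg hα0])
  have hI : 1/(1+ℓ)^2 ≤ 1/(1+ℓ) := by
    rw [div_le_div_iff₀ (by positivity) h1ℓ]; nlinarith
  have hx : |β| * ℓ^2 ≤ (1/(1+ℓ) + 1/(1+ℓ)^2 + q*(q-1)*A*pq + s*(s-1)*B*ps) + α :=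
    hβl.le.trans hβb
  rw [habs, hα] at *
  have g1 : 0 ≤ ((n:ℝ)^2-q-1)*q*(A*pq) :=
    mul_nonneg (mul_nonneg (by linarith) (by linarith)) hApq.le
  have g2 : 0 ≤ ((n:ℝ)^2-s-1)*s*(B*ps) :=
    mul_nonneg (mul_nonneg (by linarith) (by linarith)) hBps.le
  have g3 : 0 ≤ (2*(n:ℝ)^2-2)*(L/ℓ) := mul_nonneg (by linarith) hLl
  have g4 : 0 ≤ (2*(n:ℝ)^2-4)*(1/(1+ℓ)) := mul_nonneg (by linarith) (by positivity)
  linarith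

lemma cfacts (q s n : ℝ)
    (hq1 : 1 < q) (hq2 : q < 2) (hs1 : 1 < s) (hs2 : s < 2) (hn4 : 4 ≤ n^2) :
    0 < n^2*(6 + 1/(q-1) + 1/(s-1)) ∧ 6*n^2 ≤ n^2*(6 + 1/(q-1) + 1/(s-1)) ∧
      n^2 ≤ (n^2*(6 + 1/(q-1) + 1/(s-1)))*(q-1) ∧
      n^2 ≤ (n^2*(6 + 1/(q-1) + 1/(s-1)))*(s-1) := by
  have hn0 : (0:ℝ) < n^2 := by linarith
  have hiq : (0:ℝ) < 1/(q-1) := by rw [one_div_pos]; linarith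
  have his : (0:ℝ) < 1/(s-1) := by rw [one_div_pos]; linarith
  have heq : (1/(q-1))*(q-1) = 1 := one_div_mul_cancel (show (0:ℝ) < q-1 by linarith).ne'
  have hes : (1/(s-1))*(s-1) = 1 := one_div_mul_cancel (show (0:ℝ) < s-1 by linarith).ne'
  refine ⟨by nlinarith, by nlinarith, ?_, ?_⟩
  · have e : (n^2*(6 + 1/(q-1) + 1/(s-1)))*(q-1) =
        n^2*(6*(q-1)) + n^2*((1/(q-1))*(q-1)) + n^2*((1/(s-1))*(q-1)) := by ring
    rw [e, heq]
    have g1 : 0 ≤ n^2*(6*(q-1)) := by nlinarith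
    have g2 : 0 ≤ n^2*((1/(s-1))*(q-1)) := by
      apply mul_nonneg hn0.le (mul_nonneg his.le (by linarith))
    linarith
  · have e : (n^2*(6 + 1/(q-1) + 1/(s-1)))*(s-1) =
        n^2*(6*(s-1)) + n^2*((1/(q-1))*(s-1)) + n^2*((1/(s-1))*(s-1)) := by ring
    rw [e, hes]
    have g1 : 0 ≤ n^2*(6*(s-1)) := by nlinarith
    have g2 : 0 ≤ n^2*((1/(q-1))*(s-1)) := by
      apply mul_nonneg hn0.le (mul_nonneg hiq.le (by linarith))
    linarith

lemma core_ratio (q s A B n ℓ L pq ps c : ℝ)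
    (hq1 : 1 < q) (hq2 : q < 2) (hs1 : 1 < s) (hs2 : s < 2)
    (hA : 0 < A) (hB : 0 < B) (hℓ1 : 1 ≤ ℓ) (hL1 : 1 ≤ L)
    (hpq : 0 < pq) (hps : 0 < ps)
    (hc0 : 0 ≤ c) (hc6 : 6*n^2 ≤ c) (hcq : n^2 ≤ c*(q-1)) (hcs : n^2 ≤ c*(s-1)) :
    2*n^2*(L/ℓ + 1/(1+ℓ)) + q*n^2*A*pq + s*n^2*B*ps ≤
      c * L * (1/(1+ℓ) + q*(q-1)*A*pq + s*(s-1)*B*ps) := by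
  have hℓ0 : (0:ℝ) < ℓ := by linarith
  have h1ℓ : (0:ℝ) < 1+ℓ := by linarith
  have hL0 : (0:ℝ) ≤ L := by linarith
  have ht2 : (0:ℝ) < 1/(1+ℓ) := by positivity
  have hd : L/ℓ ≤ 2*(L*(1/(1+ℓ))) := by
    rw [div_le_iff₀ hℓ0]
    have expand : 2*(L*(1/(1+ℓ)))*ℓ = 2*L*ℓ/(1+ℓ) := by ring
    rw [expand, le_div_iff₀ h1ℓ]
    nlinarith [mul_nonneg hL0 (show (0:ℝ) ≤ ℓ-1 by linarith)]
  have h2 : 1/(1+ℓ) ≤ L*(1/(1+ℓ)) := by nlinarith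
  have hLt2 : 0 ≤ L*(1/(1+ℓ)) := by positivity
  have ha1 : 2*n^2*(L/ℓ + 1/(1+ℓ)) ≤ c*L*(1/(1+ℓ)) := by
    have hsum : L/ℓ + 1/(1+ℓ) ≤ 3*(L*(1/(1+ℓ))) := by linarith
    have h5 := mul_le_mul_of_nonneg_left hsum (show (0:ℝ) ≤ 2*n^2 by nlinarith)
    have h6 := mul_le_mul_of_nonneg_right hc6 hLt2
    have e1 : 2*n^2*(3*(L*(1/(1+ℓ)))) = 6*n^2*(L*(1/(1+ℓ))) := by ring
    have e2 : c*(L*(1/(1+ℓ))) = c*L*(1/(1+ℓ)) := by ring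
    linarith
  have hq0 : (0:ℝ) ≤ q*A*pq := by positivity
  have hs0 : (0:ℝ) ≤ s*B*ps := by positivity
  have hcqL : n^2 ≤ c*(q-1)*L := by
    have g := mul_nonneg (mul_nonneg hc0 (show (0:ℝ) ≤ q-1 by linarith))
      (show (0:ℝ) ≤ L-1 by linarith)
    have e : c*(q-1)*(L-1) = c*(q-1)*L - c*(q-1) := by ring
    linarith [e ▸ g]
  have hcsL : n^2 ≤ c*(s-1)*L := by
    have g := mul_nonneg (mul_nonneg hc0 (show (0:ℝ) ≤ s-1 by linarith))
      (show (0:ℝ) ≤ L-1 by linarith)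
    have e : c*(s-1)*(L-1) = c*(s-1)*L - c*(s-1) := by ring
    linarith [e ▸ g]
  have ha2 : q*n^2*A*pq ≤ c*L*(q*(q-1)*A*pq) := by
    have := mul_le_mul_of_nonneg_right hcqL hq0
    linarith [this]
  have ha3 : s*n^2*B*ps ≤ c*L*(s*(s-1)*B*ps) := by
    have := mul_le_mul_of_nonneg_right hcsL hs0
    linarith [this]
  have efin : c*L*(1/(1+ℓ) + q*(q-1)*A*pq + s*(s-1)*B*ps) =
      c*L*(1/(1+ℓ)) + c*L*(q*(q-1)*A*pq) + c*L*(s*(s-1)*B*ps) := by ring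
  linarith [ha1, ha2, ha3, efin]

end Statement9Helpers

set_option maxHeartbeats 1000000 in
/-- **Eigenvalue bounds `λ_{ω,σ}`, `Λ_{ω,σ}` for `∂_{zz}H_{ω,σ}` and the logarithmic
bound on their ratio.** -/
theorem statement9
    (n : ℕ) (hn : 2 ≤ n) (q s : ℝ)
    (hq1 : 1 < q) (hq2 : q < 2) (hs1 : 1 < s) (hs2 : s < 2) :
    ∃ c : ℝ, 0 < c ∧
      ∀ (ω σ : ℝ), 0 < ω → ω ≤ 1 → 0 < σ → σ < 1 →
      ∀ (a b : En n → ℝ), (∀ x, 0 ≤ a x) → (∀ x, 0 ≤ b x) →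
      ∀ (x : En n) (z ξ : En n),
        let A := a x + σ
        let B := b x + σ
        let lam : ℝ := 1 / (1 + ellw ω ‖z‖) +
          q * min 1 (q - 1) * A * ellw ω ‖z‖ ^ (q - 2) +
          s * min 1 (s - 1) * B * ellw ω ‖z‖ ^ (s - 2)
        let Lam : ℝ := 2 * (n : ℝ) ^ 2 *
            (Real.log (1 + ellw ω ‖z‖) / ellw ω ‖z‖ + 1 / (1 + ellw ω ‖z‖)) +
          q * (n : ℝ) ^ 2 * max 1 (q - 1) * A * ellw ω ‖z‖ ^ (q - 2) +
          s * (n : ℝ) ^ 2 * max 1 (s - 1) * B * ellw ω ‖z‖ ^ (s - 2)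
        (lam * ‖ξ‖ ^ 2 ≤ fderiv ℝ (fderiv ℝ (HzFun n ω q s A B)) z ξ ξ ∧
          ‖fderiv ℝ (fderiv ℝ (HzFun n ω q s A B)) z‖ ≤ Lam) ∧
        (Real.exp 1 - 1 ≤ ‖z‖ → Lam / lam ≤ c * Real.log (1 + ellw ω ‖z‖)) := by
  classical
  have hn2 : (2:ℝ) ≤ (n:ℝ) := by exact_mod_cast hn
  have hn4 : (4:ℝ) ≤ (n:ℝ)^2 := by nlinarith
  obtain ⟨hc0, hc6, hcq, hcs⟩ := cfacts q s (n:ℝ) hq1 hq2 hs1 hs2 hn4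
  refine ⟨(n:ℝ)^2*(6 + 1/(q-1) + 1/(s-1)), hc0, ?_⟩
  intro ω σ hω hω1 hσ hσ1 a b ha hb x z ξ
  intro A B lam Lam
  have hA : 0 < A := by have := ha x; show (0:ℝ) < a x + σ; linarith
  have hB : 0 < B := by have := hb x; show (0:ℝ) < b x + σ; linarith
  have hr : (0:ℝ) < ω^2 + ‖z‖^2 := by positivity
  have hellw : ellw ω ‖z‖ = Real.sqrt (ω^2 + ‖z‖^2) := rfl
  have hℓpos : 0 < ellw ω ‖z‖ := by rw [hellw]; exact Real.sqrt_pos.2 hr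
  have h1ℓ : (0:ℝ) < 1 + ellw ω ‖z‖ := by linarith
  have hℓsq : (ellw ω ‖z‖)^2 = ω^2 + ‖z‖^2 := by rw [hellw]; exact Real.sq_sqrt hr.le
  have hzℓ : ‖z‖^2 ≤ (ellw ω ‖z‖)^2 := by rw [hℓsq]; nlinarith
  have hL0 : 0 ≤ Real.log (1 + ellw ω ‖z‖) := Real.log_nonneg (by linarith)
  have hpq : 0 < ellw ω ‖z‖ ^ (q-2) := Real.rpow_pos_of_pos hℓpos _
  have hps : 0 < ellw ω ‖z‖ ^ (s-2) := Real.rpow_pos_of_pos hℓpos _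
  have hminq : min 1 (q-1) = q-1 := min_eq_right (by linarith)
  have hmins : min 1 (s-1) = s-1 := min_eq_right (by linarith)
  have hmaxq : max 1 (q-1) = 1 := max_eq_left (by linarith)
  have hmaxs : max 1 (s-1) = 1 := max_eq_left (by linarith)
  have hlam : lam = 1/(1 + ellw ω ‖z‖) + q*(q-1)*A*ellw ω ‖z‖^(q-2) +
      s*(s-1)*B*ellw ω ‖z‖^(s-2) := by
    rw [show lam = 1 / (1 + ellw ω ‖z‖) +
      q * min 1 (q - 1) * A * ellw ω ‖z‖ ^ (q - 2) +
      s * min 1 (s - 1) * B * ellw ω ‖z‖ ^ (s - 2) from rfl, hminq, hmins]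
  have hLam : Lam = 2*(n:ℝ)^2*(Real.log (1 + ellw ω ‖z‖)/ellw ω ‖z‖ + 1/(1+ellw ω ‖z‖)) +
      q*(n:ℝ)^2*A*ellw ω ‖z‖^(q-2) + s*(n:ℝ)^2*B*ellw ω ‖z‖^(s-2) := by
    rw [show Lam = 2 * (n : ℝ) ^ 2 *
        (Real.log (1 + ellw ω ‖z‖) / ellw ω ‖z‖ + 1 / (1 + ellw ω ‖z‖)) +
      q * (n : ℝ) ^ 2 * max 1 (q - 1) * A * ellw ω ‖z‖ ^ (q - 2) +
      s * (n : ℝ) ^ 2 * max 1 (s - 1) * B * ellw ω ‖z‖ ^ (s - 2) from rfl, hmaxq, hmaxs]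
    ring
  have hαval : m0 q s A B (ellw ω ‖z‖) = Real.log (1+ellw ω ‖z‖)/ellw ω ‖z‖ +
      1/(1+ellw ω ‖z‖) + q*A*ellw ω ‖z‖^(q-2) + s*B*ellw ω ‖z‖^(s-2) := rfl
  have hβval : (dm0 q s A B (ellw ω ‖z‖) / ellw ω ‖z‖) * (ellw ω ‖z‖)^2 =
      (1/(1+ellw ω ‖z‖) + 1/(1+ellw ω ‖z‖)^2 + q*(q-1)*A*ellw ω ‖z‖^(q-2) +
        s*(s-1)*B*ellw ω ‖z‖^(s-2)) - m0 q s A B (ellw ω ‖z‖) := by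
    unfold m0 dm0
    field_simp
    ring
  clear_value A B lam Lam
  refine ⟨⟨?_, ?_⟩, ?_⟩
  · -- lower bound
    rw [fderiv2_apply n ω q s A B hω z ξ, hlam]
    have hP : (0:ℝ) ≤ (inner ℝ z ξ : ℝ) * (inner ℝ z ξ : ℝ) := mul_self_nonneg _
    have hPN : (inner ℝ z ξ : ℝ) * (inner ℝ z ξ : ℝ) ≤ (ellw ω ‖z‖)^2 * ‖ξ‖^2 := by
      have h := abs_real_inner_le_norm z ξ
      have e1 : (inner ℝ z ξ : ℝ) * (inner ℝ z ξ : ℝ) = |(inner ℝ z ξ : ℝ)|^2 := by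
        rw [sq_abs]; ring
      have e2 : |(inner ℝ z ξ : ℝ)|^2 ≤ (‖z‖*‖ξ‖)^2 := by
        exact pow_le_pow_left₀ (abs_nonneg _) h 2
      have e3 : (‖z‖*‖ξ‖)^2 = ‖z‖^2*‖ξ‖^2 := by ring
      have e4 : ‖z‖^2*‖ξ‖^2 ≤ (ellw ω ‖z‖)^2*‖ξ‖^2 :=
        mul_le_mul_of_nonneg_right hzℓ (sq_nonneg _)
      linarith [e1, e2, e3, e4]
    exact core_lower q s A B (ellw ω ‖z‖) (Real.log (1+ellw ω ‖z‖))
      (ellw ω ‖z‖^(q-2)) (ellw ω ‖z‖^(s-2)) (m0 q s A B (ellw ω ‖z‖))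
      (dm0 q s A B (ellw ω ‖z‖) / ellw ω ‖z‖)
      ((inner ℝ z ξ : ℝ) * (inner ℝ z ξ : ℝ)) (‖ξ‖^2)
      hq1 hq2 hs1 hs2 hA hB hℓpos hL0 hpq hps hαval hβval hP hPN (sq_nonneg _)
  · -- upper bound
    refine (fderiv2_norm_le n ω q s A B hω z).trans ?_
    rw [hLam]
    exact core_upper q s A B (n:ℝ) (ellw ω ‖z‖) (Real.log (1+ellw ω ‖z‖))
      (ellw ω ‖z‖^(q-2)) (ellw ω ‖z‖^(s-2)) (m0 q s A B (ellw ω ‖z‖))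
      (dm0 q s A B (ellw ω ‖z‖) / ellw ω ‖z‖) (‖z‖^2)
      hq1 hq2 hs1 hs2 hA hB hℓpos hL0 hpq hps hn4 hαval hβval (sq_nonneg _) hzℓ
  · -- ratio bound
    intro hze
    have hℓz : ‖z‖ ≤ ellw ω ‖z‖ := by
      nlinarith [hzℓ, norm_nonneg z, hℓpos]
    have hexp : (2:ℝ) ≤ Real.exp 1 := by
      have := Real.add_one_le_exp (1:ℝ); linarith
    have hℓ1 : 1 ≤ ellw ω ‖z‖ := by linarith
    have hL1 : 1 ≤ Real.log (1 + ellw ω ‖z‖) := by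
      rw [Real.le_log_iff_exp_le h1ℓ]
      simpa using (by linarith : Real.exp 1 ≤ 1 + ellw ω ‖z‖)
    have hqq : 0 ≤ q*(q-1)*A*ellw ω ‖z‖^(q-2) := by
      have := mul_nonneg (mul_nonneg (mul_nonneg (show (0:ℝ) ≤ q by linarith)
        (show (0:ℝ) ≤ q-1 by linarith)) hA.le) hpq.le
      linarith
    have hss : 0 ≤ s*(s-1)*B*ellw ω ‖z‖^(s-2) := by
      have := mul_nonneg (mul_nonneg (mul_nonneg (show (0:ℝ) ≤ s by linarith)
        (show (0:ℝ) ≤ s-1 by linarith)) hB.le) hps.le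
      linarith
    have hlampos : 0 < lam := by
      rw [hlam]
      have : (0:ℝ) < 1/(1 + ellw ω ‖z‖) := by positivity
      linarith
    rw [div_le_iff₀ hlampos, hlam]
    calc Lam ≤ ((n:ℝ)^2*(6 + 1/(q-1) + 1/(s-1))) * Real.log (1 + ellw ω ‖z‖) *
        (1/(1 + ellw ω ‖z‖) + q*(q-1)*A*ellw ω ‖z‖^(q-2) + s*(s-1)*B*ellw ω ‖z‖^(s-2)) := by
          rw [hLam]
          exact core_ratio q s A B (n:ℝ) (ellw ω ‖z‖) (Real.log (1+ellw ω ‖z‖))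
            (ellw ω ‖z‖^(q-2)) (ellw ω ‖z‖^(s-2))
            ((n:ℝ)^2*(6 + 1/(q-1) + 1/(s-1)))
            hq1 hq2 hs1 hs2 hA hB hℓ1 hL1 hpq hps hc0.le hc6 hcq hcs
      _ = _ := by ring
end
end
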